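/- arXiv:2011.04152 — 3 statements merged into one kernel-verified Lean document; each statement's English description precedes it below -/
import Mathlib

section
/- For all nonnegative integers n and m with n < m, setting τ = 2(n+m+2)/((n+1)(m+1)), the real number 8(n+m+2)/((n+1)(m+1)²) − (∫₀^{2/(m+1)} (4(n+m+2)/((n+1)(m+1)) − (m+1)λ²) dλ + ∫_{2/(m+1)}^{τ} (n+1)(τ − λ)² dλ) equals 8/(3(m+1)²) − 8/(3(n+1)²), and this number is strictly negative. -/
lemma aux_int1 (K b c : ℝ) :
    (∫ l in (0:ℝ)..c, (K - b * l ^ 2)) = K * c - b * (c ^ 3 / 3) := by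
  rw [intervalIntegral.integral_sub (intervalIntegrable_const)
      ((intervalIntegral.intervalIntegrable_pow 2).const_mul b),
    intervalIntegral.integral_const, intervalIntegral.integral_const_mul,
    integral_pow]
  simp [smul_eq_mul]; ring

lemma aux_int2 (a c τ : ℝ) :
    (∫ l in c..τ, a * (τ - l) ^ 2) = a * ((τ - c) ^ 3 / 3) := by
  rw [intervalIntegral.integral_const_mul]
  have := intervalIntegral.integral_comp_sub_left (a := c) (b := τ) (fun x => x ^ 2) τ
  rw [this, integral_pow]
  ring

/-- The Fujita β-invariant computation for the quasi-smooth hypersurface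
`S ⊂ P(1,1,n+1,m+1)` of degree `n+m+2` with `n < m`:
`β(E) = 8(n+m+2)/((n+1)(m+1)²) - ∫₀^{τ} vol(π*(-K_S) - λE) dλ`
equals `8/(3(m+1)²) - 8/(3(n+1)²)`, which is strictly negative. -/
theorem stmt_7 (n m : ℕ) (hnm : n < m)
    (τ : ℝ) (hτ : τ = 2 * ((n : ℝ) + m + 2) / (((n : ℝ) + 1) * ((m : ℝ) + 1))) :
    8 * ((n : ℝ) + m + 2) / (((n : ℝ) + 1) * ((m : ℝ) + 1) ^ 2) -
        ((∫ l in (0:ℝ)..(2 / ((m : ℝ) + 1)),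
            (4 * ((n : ℝ) + m + 2) / (((n : ℝ) + 1) * ((m : ℝ) + 1)) -
              ((m : ℝ) + 1) * l ^ 2)) +
          (∫ l in (2 / ((m : ℝ) + 1))..τ, ((n : ℝ) + 1) * (τ - l) ^ 2)) =
      8 / (3 * ((m : ℝ) + 1) ^ 2) - 8 / (3 * ((n : ℝ) + 1) ^ 2) ∧
    8 / (3 * ((m : ℝ) + 1) ^ 2) - 8 / (3 * ((n : ℝ) + 1) ^ 2) < 0 := by
  have hn : (0:ℝ) < (n:ℝ) + 1 := by positivity
  have hm : (0:ℝ) < (m:ℝ) + 1 := by positivity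
  have hnm' : (n:ℝ) + 1 < (m:ℝ) + 1 := by
    have : (n:ℝ) < m := by exact_mod_cast hnm
    linarith
  constructor
  · rw [aux_int1, aux_int2, hτ]
    field_simp
    ring
  · rw [sub_neg, div_lt_div_iff₀ (by positivity) (by positivity)]
    nlinarith [sq_nonneg ((n:ℝ)+1), sq_nonneg ((m:ℝ)+1), mul_pos hn hm]
end

section
/- Fix a nonnegative integer n, set c = (4n+8)/(3n+5), and let M be the symmetric 3×3 real matrix with rows (−(2n+3)/((n+1)(3n+4)), 0, 1/(n+1)), (0, −2/3, 1), (1/(n+1), 1, −(3n+5)/(2n+2)). Then for every real λ, writing u = c − λ, the vector P₂(λ) = (((3n+4)/(2n+3))u, (3/2)u, u) satisfies P₂(λ)ᵀ M P₂(λ) = (3/2 − (6n+7)/(4n+6))u², and (M P₂(λ))_0 = (M P₂(λ))_1 = 0. -/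
open Matrix

/-- Intersection computation on the weighted blow-up `Y → S` of the quasi-smooth
hypersurface `S ⊂ P(1,3,3n+4,3n+5)` of degree `6n+11`: with the intersection
matrix `M` of `L̄, R̄, E` and `P₂(λ)` the coefficient vector of the positive part
`P₂ = ((3n+4)/(2n+3))(c-λ)L̄ + (3/2)(c-λ)R̄ + (c-λ)E`, writing `u = c - λ`, we
have `P₂(λ)ᵀ M P₂(λ) = (3/2 - (6n+7)/(4n+6))u²` and `(M P₂(λ))₀ = (M P₂(λ))₁ = 0`. -/
theorem stmt_10 (n : ℕ) (c : ℝ) (hc : c = (4 * (n : ℝ) + 8) / (3 * (n : ℝ) + 5))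
    (M : Matrix (Fin 3) (Fin 3) ℝ)
    (hM : M = !![-(2 * (n : ℝ) + 3) / (((n : ℝ) + 1) * (3 * (n : ℝ) + 4)), 0,
        1 / ((n : ℝ) + 1);
      0, -2/3, 1;
      1 / ((n : ℝ) + 1), 1, -(3 * (n : ℝ) + 5) / (2 * (n : ℝ) + 2)])
    (P₂ : ℝ → Fin 3 → ℝ)
    (hP₂ : ∀ l, P₂ l = ![((3 * (n : ℝ) + 4) / (2 * (n : ℝ) + 3)) * (c - l),
      (3/2) * (c - l), c - l]) :
    ∀ l : ℝ,
      P₂ l ⬝ᵥ M.mulVec (P₂ l) =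
        (3/2 - (6 * (n : ℝ) + 7) / (4 * (n : ℝ) + 6)) * (c - l) ^ 2 ∧
      M.mulVec (P₂ l) 0 = 0 ∧ M.mulVec (P₂ l) 1 = 0 := by
  intro l
  subst hM
  rw [hP₂]
  have h1 : ((n : ℝ) + 1) ≠ 0 := by positivity
  have h2 : (3 * (n : ℝ) + 4) ≠ 0 := by positivity
  have h3 : (2 * (n : ℝ) + 3) ≠ 0 := by positivity
  have h4 : (2 * (n : ℝ) + 2) ≠ 0 := by positivity
  have h5 : (4 * (n : ℝ) + 6) ≠ 0 := by positivity
  refine ⟨?_, ?_, ?_⟩ <;>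
    simp [Matrix.mulVec, dotProduct, Fin.sum_univ_succ] <;>
    field_simp <;> ring
end

section
/- For every nonnegative integer n, the real number ((n+3)/(3n+5))·(4(6n+11)/(3(3n+4)(3n+5))) − (8/27)·(108n³ + 594n² + 1053n + 601)/((3n+4)²(3n+5)²) is strictly negative. -/
/-- The Fujita β-invariant of the exceptional divisor `E` of the weighted
blow-up of the quasi-smooth hypersurface `S ⊂ P(1,3,3n+4,3n+5)` of degree
`6n+11` is strictly negative:
`β(E) = ((n+3)/(3n+5))·(4(6n+11)/(3(3n+4)(3n+5)))
  - (8/27)(108n³+594n²+1053n+601)/((3n+4)²(3n+5)²) < 0`. -/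
theorem stmt_12 (n : ℕ) :
    (((n : ℝ) + 3) / (3 * (n : ℝ) + 5)) *
        (4 * (6 * (n : ℝ) + 11) / (3 * (3 * (n : ℝ) + 4) * (3 * (n : ℝ) + 5))) -
      (8/27) * (108 * (n : ℝ) ^ 3 + 594 * (n : ℝ) ^ 2 + 1053 * (n : ℝ) + 601) /
        ((3 * (n : ℝ) + 4) ^ 2 * (3 * (n : ℝ) + 5) ^ 2) < 0 := by
  have hx : (0:ℝ) ≤ (n:ℝ) := n.cast_nonneg
  have h4 : (0:ℝ) < 3 * (n:ℝ) + 4 := by linarith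
  have h5 : (0:ℝ) < 3 * (n:ℝ) + 5 := by linarith
  rw [sub_neg]
  rw [div_mul_div_comm, div_lt_div_iff₀ (by positivity) (by positivity)]
  ring_nf
  nlinarith [pow_nonneg hx 2, pow_nonneg hx 3, pow_nonneg hx 4, pow_nonneg hx 5, pow_nonneg hx 6]
end
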